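/- For |q|<1 and complex a, b with |a|,|b|<1: Σ_{n≥0} h_n(a,b|q²) / (q;q)_n = (abq;q²)_∞ / ((a;q)_∞ (b;q)_∞), where h_n(a,b|q²) = Σ_{k=0}^n [n choose k]_{q²} a^k b^{n−k}. -/

import Mathlib

/-
Since `(q²;q²)_n = (q;q)_n (-q;q)_n`, the left side is the double series
`∑ a^k b^m (-q;q)_{k+m} / ((q²;q²)_k (q²;q²)_m)`. Expanding the right side by Euler's identities
`1/(x;q)_∞ = ∑ xⁿ/(q;q)_n` and `(x;Q)_∞ = ∑ (-1)ⁿ Q^(n choose 2) xⁿ/(Q;Q)_n` (each obtained by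
iterating the functional equation of the series in `x` towards `x = 0`), the coefficient of
`a^k b^m` becomes the terminating sum `∑_t (-1)^t q^(t²) / ((q²;q²)_t (q;q)_{k-t} (q;q)_{m-t})`.
Both expressions satisfy `(1 - q^(2m+2)) S_{m+1} = (1 + q^(k+m+1)) S_m` and agree at `m = 0`; for
the sum the recurrence telescopes term by term.
-/

open Finset

noncomputable def qp (x q : ℂ) (n : ℕ) : ℂ := ∏ j ∈ Finset.range n, (1 - x * q ^ j)

noncomputable def qpinf (x q : ℂ) : ℂ := ∏' j : ℕ, (1 - x * q ^ j)

noncomputable def qbinom (q : ℂ) (n k : ℕ) : ℂ := qp q q n / (qp q q k * qp q q (n - k))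

noncomputable def RS (a b q : ℂ) (n : ℕ) : ℂ :=
  ∑ k ∈ Finset.range (n + 1), qbinom q n k * a ^ k * b ^ (n - k)

noncomputable def Tsum (q : ℂ) (r n s : ℕ) : ℂ :=
  ∑ k ∈ Finset.range (n + 1),
    qp (q ^ (-(2 * (n : ℤ)))) (q ^ 2) k / (qp q q k * qp (q ^ ((1 : ℤ) + r - n)) q k)
      * q ^ ((2 - (s : ℤ)) * k)

noncomputable def gam (q : ℂ) (n : ℕ) : ℂ :=
  ∑ k ∈ Finset.range (n + 1), qbinom q n k * q ^ (k ^ 2) / qp (-q) q k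

open Filter Topology

@[simp]
lemma qp_zero (x q : ℂ) : qp x q 0 = 1 := Finset.prod_range_zero _

lemma qp_succ (x q : ℂ) (n : ℕ) : qp x q (n + 1) = qp x q n * (1 - x * q ^ n) :=
  Finset.prod_range_succ _ _

lemma qp_self_succ (q : ℂ) (n : ℕ) : qp q q (n + 1) = qp q q n * (1 - q ^ (n + 1)) := by
  rw [qp_succ, pow_succ']

lemma qp_sq (q : ℂ) (n : ℕ) : qp (q ^ 2) (q ^ 2) n = qp q q n * qp (-q) q n := by
  rw [qp, qp, qp, ← Finset.prod_mul_distrib]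
  refine Finset.prod_congr rfl fun j _ => ?_
  ring

noncomputable def eulerCoeff (q : ℂ) (n : ℕ) : ℂ := (-1) ^ n * q ^ n.choose 2 / qp q q n

lemma eulerCoeff_succ (q : ℂ) (n : ℕ) :
    eulerCoeff q (n + 1) = -q ^ n * (1 - q ^ (n + 1))⁻¹ * eulerCoeff q n := by
  simp only [eulerCoeff, qp_self_succ, Nat.choose_succ_succ', Nat.choose_one_right, pow_add,
    pow_succ (-1 : ℂ), div_eq_mul_inv, mul_inv]
  ring

section FiniteIdentities

variable {q : ℂ}

lemma one_sub_pow_ne_zero (hq : ¬IsOfFinOrder q) {n : ℕ} (hn : n ≠ 0) : 1 - q ^ n ≠ 0 :=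
  sub_ne_zero.2 fun h => hq (isOfFinOrder_iff_pow_eq_one.2 ⟨n, Nat.pos_of_ne_zero hn, h.symm⟩)

lemma qp_self_ne_zero (hq : ¬IsOfFinOrder q) (n : ℕ) : qp q q n ≠ 0 := by
  induction n with
  | zero => simp
  | succ n ih => exact qp_self_succ q n ▸ mul_ne_zero ih (one_sub_pow_ne_zero hq n.succ_ne_zero)

lemma not_isOfFinOrder_sq (hq : ¬IsOfFinOrder q) : ¬IsOfFinOrder (q ^ 2) := by
  simpa [isOfFinOrder_pow] using hq

lemma inv_qp_self_eq (hq : ¬IsOfFinOrder q) (n : ℕ) :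
    (qp q q n)⁻¹ = (1 - q ^ (n + 1)) * (qp q q (n + 1))⁻¹ := by
  rw [qp_self_succ, mul_inv, mul_left_comm, mul_inv_cancel₀ (one_sub_pow_ne_zero hq n.succ_ne_zero),
    mul_one]

lemma one_sub_pow_mul_eulerCoeff_succ (hq : ¬IsOfFinOrder q) (n : ℕ) :
    (1 - q ^ (n + 1)) * eulerCoeff q (n + 1) = -q ^ n * eulerCoeff q n := by
  rw [eulerCoeff_succ]
  field_simp [one_sub_pow_ne_zero hq n.succ_ne_zero]

/-- `1 / (q;q)_{k-t}`, extended by zero for `t > k`, so that its recurrences hold for all `t`. -/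
noncomputable def qpInvSub (q : ℂ) (k t : ℕ) : ℂ := if t ≤ k then (qp q q (k - t))⁻¹ else 0

lemma qpInvSub_of_lt {k t : ℕ} (h : k < t) : qpInvSub q k t = 0 := if_neg h.not_ge

@[simp]
lemma qpInvSub_add_self (r t : ℕ) : qpInvSub q (r + t) t = (qp q q r)⁻¹ := by
  simp [qpInvSub]

lemma qpInvSub_succ_right (hq : ¬IsOfFinOrder q) (k t : ℕ) :
    qpInvSub q k (t + 1) = (1 - q ^ (k - t)) * qpInvSub q k t := by
  rcases lt_trichotomy t k with h | rfl | h
  · obtain ⟨j, rfl⟩ := Nat.exists_eq_add_of_lt h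
    rw [show t + j + 1 = j + (t + 1) by ring, qpInvSub_add_self,
      show j + (t + 1) - t = j + 1 by omega, show j + (t + 1) = (j + 1) + t by ring,
      qpInvSub_add_self, inv_qp_self_eq hq]
  · simp [qpInvSub_of_lt (Nat.lt_succ_self t)]
  · simp [qpInvSub_of_lt h, qpInvSub_of_lt (h.trans (Nat.lt_succ_self t))]

lemma qpInvSub_succ_left (hq : ¬IsOfFinOrder q) (k t : ℕ) :
    qpInvSub q k t = (1 - q ^ (k + 1 - t)) * qpInvSub q (k + 1) t := by
  rcases le_or_gt t k with h | h
  · obtain ⟨j, rfl⟩ := Nat.exists_eq_add_of_le' h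
    rw [qpInvSub_add_self, show j + t + 1 = (j + 1) + t by ring, qpInvSub_add_self,
      Nat.add_sub_cancel, inv_qp_self_eq hq]
  · rcases Nat.lt_or_ge (k + 1) t with h' | h'
    · simp [qpInvSub_of_lt h, qpInvSub_of_lt h']
    · simp [qpInvSub_of_lt h, show k + 1 - t = 0 by omega]

/-- The coefficient of `a ^ k * b ^ m` in `∑ₙ h_n(a, b | q²) / (q;q)_n`. -/
noncomputable def rsCoeff (q : ℂ) (k m : ℕ) : ℂ :=
  qp (-q) q (k + m) / (qp (q ^ 2) (q ^ 2) k * qp (q ^ 2) (q ^ 2) m)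

/-- `(-1)^t q^(t²) / ((q²;q²)_t (q;q)_{k-t} (q;q)_{m-t})`: the part of the coefficient of
`a ^ k * b ^ m` in `(abq;q²)_∞ / ((a;q)_∞ (b;q)_∞)` that comes from the `t`-th term of
`(abq;q²)_∞`. -/
noncomputable def rsCoeffSummand (q : ℂ) (k m t : ℕ) : ℂ :=
  eulerCoeff (q ^ 2) t * q ^ t * qpInvSub q k t * qpInvSub q m t

/-- Telescopes the recurrence of `rsCoeffSummand` in `m`; it is `q ^ (n - t) * (1 - q ^ (2 * t))`
times `rsCoeffSummand q k n t`. -/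
noncomputable def rsCoeffTelescope (q : ℂ) (k n t : ℕ) : ℂ :=
  q ^ n * ((1 - (q ^ 2) ^ t) * eulerCoeff (q ^ 2) t) * qpInvSub q k t * qpInvSub q n t

lemma rsCoeffSummand_recurrence (hq : ¬IsOfFinOrder q) {k m t : ℕ} (ht : t ≤ m + 1) :
    (1 - (q ^ 2) ^ (m + 1)) * rsCoeffSummand q k (m + 1) t
        - (1 + q ^ (k + m + 1)) * rsCoeffSummand q k m t
      = rsCoeffTelescope q k (m + 1) t - rsCoeffTelescope q k (m + 1) (t + 1) := by
  rcases lt_or_ge k t with hk | hk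
  · simp [rsCoeffSummand, rsCoeffTelescope, qpInvSub_of_lt hk,
      qpInvSub_of_lt (hk.trans (Nat.lt_succ_self t))]
  simp only [rsCoeffSummand, rsCoeffTelescope,
    one_sub_pow_mul_eulerCoeff_succ (not_isOfFinOrder_sq hq), qpInvSub_succ_right hq,
    qpInvSub_succ_left hq m t]
  obtain ⟨i, rfl⟩ := Nat.exists_eq_add_of_le' hk
  obtain ⟨j, hj⟩ := Nat.exists_eq_add_of_le' ht
  rw [show i + t + m + 1 = i + t + (m + 1) by ring, hj, Nat.add_sub_cancel, Nat.add_sub_cancel]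
  ring

lemma sum_rsCoeffSummand_succ (hq : ¬IsOfFinOrder q) (k m : ℕ) :
    (1 - (q ^ 2) ^ (m + 1)) * ∑ t ∈ Finset.range (m + 2), rsCoeffSummand q k (m + 1) t
      = (1 + q ^ (k + m + 1)) * ∑ t ∈ Finset.range (m + 1), rsCoeffSummand q k m t := by
  have htel := Finset.sum_range_sub' (rsCoeffTelescope q k (m + 1)) (m + 2)
  rw [← Finset.sum_congr rfl fun t ht =>
    rsCoeffSummand_recurrence hq (Finset.mem_range_succ_iff.1 ht)] at htel
  have hlast : ∑ t ∈ Finset.range (m + 2), rsCoeffSummand q k m t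
      = ∑ t ∈ Finset.range (m + 1), rsCoeffSummand q k m t := by
    simp [Finset.sum_range_succ _ (m + 1), rsCoeffSummand, qpInvSub_of_lt (Nat.lt_succ_self m)]
  rw [Finset.sum_sub_distrib, ← Finset.mul_sum, ← Finset.mul_sum, hlast] at htel
  simpa [rsCoeffTelescope, qpInvSub_of_lt (Nat.lt_succ_self (m + 1)), sub_eq_zero] using htel

lemma rsCoeff_zero_right (hq : ¬IsOfFinOrder q) (k : ℕ) : rsCoeff q k 0 = (qp q q k)⁻¹ := by
  have h := qp_self_ne_zero (not_isOfFinOrder_sq hq) k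
  rw [qp_sq] at h
  obtain ⟨h₁, h₂⟩ := mul_ne_zero_iff.1 h
  rw [rsCoeff, qp_sq, add_zero, qp_zero, mul_one]
  field_simp

lemma rsCoeff_succ_right (hq : ¬IsOfFinOrder q) (k m : ℕ) :
    (1 - (q ^ 2) ^ (m + 1)) * rsCoeff q k (m + 1) = (1 + q ^ (k + m + 1)) * rsCoeff q k m := by
  have hQ := not_isOfFinOrder_sq hq
  have := qp_self_ne_zero hQ k
  have := qp_self_ne_zero hQ m
  have := one_sub_pow_ne_zero hQ m.succ_ne_zero
  rw [rsCoeff, rsCoeff, ← add_assoc, qp_succ, qp_self_succ]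
  field_simp
  ring

theorem sum_rsCoeffSummand (hq : ¬IsOfFinOrder q) (k m : ℕ) :
    ∑ t ∈ Finset.range (m + 1), rsCoeffSummand q k m t = rsCoeff q k m := by
  induction m with
  | zero => simp [rsCoeffSummand, eulerCoeff, rsCoeff_zero_right hq, qpInvSub]
  | succ m ih =>
    refine mul_left_cancel₀ (one_sub_pow_ne_zero (not_isOfFinOrder_sq hq) m.succ_ne_zero) ?_
    rw [sum_rsCoeffSummand_succ hq, ih, rsCoeff_succ_right hq]

lemma qbinom_sq_div_qp (hq : ¬IsOfFinOrder q) {n k : ℕ} (hk : k ≤ n) :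
    qbinom (q ^ 2) n k / qp q q n = rsCoeff q k (n - k) := by
  have := qp_self_ne_zero hq n
  rw [qbinom, rsCoeff, Nat.add_sub_cancel' hk, qp_sq q n]
  field_simp

end FiniteIdentities

lemma norm_mul_lt_one {y z : ℂ} (hy : ‖y‖ ≤ 1) (hz : ‖z‖ < 1) : ‖y * z‖ < 1 := by
  rw [norm_mul]
  exact mul_lt_one_of_nonneg_of_lt_one_right hy (norm_nonneg _) hz

lemma tsum_mul_zero_pow (c : ℕ → ℂ) : ∑' n, c n * (0 : ℂ) ^ n = c 0 := by
  rw [tsum_eq_single 0 fun n hn => by simp [hn]]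
  simp

lemma summable_norm_mul_pow_of_ratio {c : ℕ → ℂ} {ε : ℕ → ℝ} {L r : ℝ} (hr : 0 ≤ r)
    (hε : Tendsto ε atTop (𝓝 L)) (hLr : L * r < 1) (hc : ∀ n, ‖c (n + 1)‖ ≤ ε n * ‖c n‖) :
    Summable fun n => ‖c n‖ * r ^ n := by
  refine summable_of_ratio_norm_eventually_le (r := (L * r + 1) / 2) (by linarith) ?_
  filter_upwards [(hε.mul_const r).eventually_lt_const (by linarith : L * r < (L * r + 1) / 2)]
    with n hn
  rw [Real.norm_of_nonneg (by positivity), Real.norm_of_nonneg (by positivity), pow_succ]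
  calc ‖c (n + 1)‖ * (r ^ n * r) ≤ ε n * ‖c n‖ * (r ^ n * r) := by gcongr; exact hc n
    _ = ε n * r * (‖c n‖ * r ^ n) := by ring
    _ ≤ (L * r + 1) / 2 * (‖c n‖ * r ^ n) := by gcongr

lemma continuousAt_tsum_mul_pow {c : ℕ → ℂ} {r : ℝ} (hr : 0 < r)
    (hc : Summable fun n => ‖c n‖ * r ^ n) : ContinuousAt (fun x => ∑' n, c n * x ^ n) 0 := by
  have hcont (n : ℕ) : Continuous fun x : ℂ => c n * x ^ n := by fun_prop
  refine (continuousOn_tsum (fun n => (hcont n).continuousOn) hc fun n x hx => ?_).continuousAt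
    (Metric.ball_mem_nhds 0 hr)
  rw [norm_mul, norm_pow]
  gcongr
  simpa using (Metric.mem_ball.1 hx).le

lemma tendsto_comp_mul_pow {φ : ℂ → ℂ} (hφ : ContinuousAt φ 0) {q : ℂ} (hq : ‖q‖ < 1) (x : ℂ) :
    Tendsto (fun n => φ (x * q ^ n)) atTop (𝓝 (φ 0)) := by
  refine hφ.tendsto.comp ?_
  simpa using (tendsto_pow_atTop_nhds_zero_of_norm_lt_one hq).const_mul x

lemma tsum_mul_pow_sub_tsum_mul_pow_mul {c : ℕ → ℂ} {q x : ℂ}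
    (h₁ : Summable fun n => c n * x ^ n) (h₂ : Summable fun n => c n * (q * x) ^ n) :
    ∑' n, c n * x ^ n - ∑' n, c n * (q * x) ^ n
      = x * ∑' n, c (n + 1) * (1 - q ^ (n + 1)) * x ^ n := by
  rw [← h₁.tsum_sub h₂, (h₁.sub h₂).tsum_eq_zero_add, ← tsum_mul_left]
  simp only [pow_zero, mul_one, sub_self, zero_add]
  congr 1
  ext n
  ring

theorem tsum_eq_tsum_sum_antidiagonal {A α : Type*} [AddCommMonoid A] [HasAntidiagonal A]
    [AddCommMonoid α] [TopologicalSpace α] [ContinuousAdd α] [T3Space α] {f : A × A → α}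
    (hf : Summable f) : ∑' p, f p = ∑' n, ∑ p ∈ antidiagonal n, f p := by
  have h := (HasAntidiagonal.sigmaAntidiagonalEquivProd.hasSum_iff.2 hf.hasSum).sigma
    fun n => hasSum_fintype _
  simp only [Function.comp_apply, HasAntidiagonal.sigmaAntidiagonalEquivProd_apply,
    Finset.sum_coe_sort (antidiagonal _) f] at h
  exact h.tsum_eq.symm

section Euler

variable {q : ℂ}

lemma not_isOfFinOrder_of_norm_lt_one (hq : ‖q‖ < 1) : ¬IsOfFinOrder q := by
  rw [isOfFinOrder_iff_pow_eq_one]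
  rintro ⟨n, hn, h⟩
  have := pow_lt_one₀ (norm_nonneg q) hq hn.ne'
  rw [← norm_pow, h, norm_one] at this
  exact this.false

lemma tendsto_qp_qpinf (hq : ‖q‖ < 1) (x : ℂ) :
    Tendsto (qp x q) atTop (𝓝 (qpinf x q)) := by
  have h : Multipliable fun j => 1 + -(x * q ^ j) :=
    Complex.multipliable_one_add_of_summable ((summable_geometric_of_norm_lt_one hq).mul_left x).neg
  simp only [← sub_eq_add_neg] at h
  exact h.hasProd.tendsto_prod_nat

lemma tendsto_norm_inv_one_sub_pow (hq : ‖q‖ < 1) :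
    Tendsto (fun n => ‖(1 - q ^ (n + 1))⁻¹‖) atTop (𝓝 1) := by
  have h : Tendsto (fun n => q ^ (n + 1)) atTop (𝓝 0) :=
    (tendsto_pow_atTop_nhds_zero_of_norm_lt_one hq).comp (tendsto_add_atTop_nat 1)
  simpa using ((h.const_sub 1).inv₀ (by simp)).norm

lemma summable_norm_inv_qp_mul_pow (hq : ‖q‖ < 1) {r : ℝ} (hr₀ : 0 ≤ r) (hr : r < 1) :
    Summable fun n => ‖(qp q q n)⁻¹‖ * r ^ n := by
  refine summable_norm_mul_pow_of_ratio hr₀ (tendsto_norm_inv_one_sub_pow hq) (by simpa) fun n => ?_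
  rw [qp_self_succ, mul_inv, norm_mul, mul_comm]

lemma summable_norm_eulerCoeff_mul_pow (hq : ‖q‖ < 1) {r : ℝ} (hr₀ : 0 ≤ r) :
    Summable fun n => ‖eulerCoeff q n‖ * r ^ n := by
  have hε : Tendsto (fun n => ‖q‖ ^ n * ‖(1 - q ^ (n + 1))⁻¹‖) atTop (𝓝 0) := by
    simpa using (tendsto_pow_atTop_nhds_zero_of_lt_one (norm_nonneg q) hq).mul
      (tendsto_norm_inv_one_sub_pow hq)
  refine summable_norm_mul_pow_of_ratio hr₀ hε (by simp) fun n => ?_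
  rw [eulerCoeff_succ, norm_mul, norm_mul, norm_neg, norm_pow]

lemma summable_inv_qp_mul_pow (hq : ‖q‖ < 1) {x : ℂ} (hx : ‖x‖ < 1) :
    Summable fun n => (qp q q n)⁻¹ * x ^ n :=
  .of_norm <| by simpa [norm_mul, norm_pow] using summable_norm_inv_qp_mul_pow hq (norm_nonneg x) hx

lemma summable_eulerCoeff_mul_pow (hq : ‖q‖ < 1) (x : ℂ) :
    Summable fun n => eulerCoeff q n * x ^ n :=
  .of_norm <| by
    simpa [norm_mul, norm_pow] using summable_norm_eulerCoeff_mul_pow hq (norm_nonneg x)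

theorem qpinf_mul_tsum_inv_qp_mul_pow (hq : ‖q‖ < 1) {x : ℂ} (hx : ‖x‖ < 1) :
    qpinf x q * ∑' n, (qp q q n)⁻¹ * x ^ n = 1 := by
  set f : ℂ → ℂ := fun y => ∑' n, (qp q q n)⁻¹ * y ^ n
  have hfun : ∀ y, ‖y‖ < 1 → f (q * y) = (1 - y) * f y := by
    intro y hy
    have h := tsum_mul_pow_sub_tsum_mul_pow_mul (summable_inv_qp_mul_pow hq hy)
      (summable_inv_qp_mul_pow hq (norm_mul_lt_one hq.le hy))
    simp only [mul_comm _ (1 - q ^ (_ + 1)), ← inv_qp_self_eq (not_isOfFinOrder_of_norm_lt_one hq)]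
      at h
    linear_combination -h
  have hiter : ∀ n, f (x * q ^ n) = qp x q n * f x := by
    intro n
    induction n with
    | zero => simp
    | succ n ih =>
      have hxq : ‖x * q ^ n‖ < 1 := by
        rw [mul_comm]; exact norm_mul_lt_one (by simpa using pow_le_one₀ (norm_nonneg q) hq.le) hx
      rw [pow_succ, ← mul_assoc, mul_comm _ q, hfun _ hxq, ih, qp_succ]
      ring
  have hcont : ContinuousAt f 0 :=
    continuousAt_tsum_mul_pow one_half_pos
      (summable_norm_inv_qp_mul_pow hq (by norm_num) (by norm_num))
  have hf0 : f 0 = 1 := by simp [f, tsum_mul_zero_pow]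
  refine tendsto_nhds_unique ((tendsto_qp_qpinf hq x).mul_const (f x)) ?_
  simpa [hf0, hiter] using tendsto_comp_mul_pow hcont hq x

theorem tsum_eulerCoeff_mul_pow (hq : ‖q‖ < 1) (x : ℂ) :
    ∑' n, eulerCoeff q n * x ^ n = qpinf x q := by
  set g : ℂ → ℂ := fun y => ∑' n, eulerCoeff q n * y ^ n
  have hfun : ∀ y, g y = (1 - y) * g (q * y) := by
    intro y
    have h := tsum_mul_pow_sub_tsum_mul_pow_mul (summable_eulerCoeff_mul_pow hq y)
      (summable_eulerCoeff_mul_pow hq (q * y))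
    simp only [mul_comm _ (1 - q ^ (_ + 1)),
      one_sub_pow_mul_eulerCoeff_succ (not_isOfFinOrder_of_norm_lt_one hq)] at h
    rw [show (fun n => -q ^ n * eulerCoeff q n * y ^ n) = fun n => -(eulerCoeff q n * (q * y) ^ n)
      by ext n; ring, tsum_neg] at h
    linear_combination h
  have hiter : ∀ n, g x = qp x q n * g (x * q ^ n) := by
    intro n
    induction n with
    | zero => simp
    | succ n ih => rw [ih, hfun (x * q ^ n), qp_succ, pow_succ]; ring_nf
  have hcont : ContinuousAt g 0 :=
    continuousAt_tsum_mul_pow one_pos (summable_norm_eulerCoeff_mul_pow hq zero_le_one)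
  have hg0 : g 0 = 1 := by simp [g, tsum_mul_zero_pow, eulerCoeff]
  have h := (tendsto_qp_qpinf hq x).mul (tendsto_comp_mul_pow hcont hq x)
  simp only [← hiter, hg0, mul_one] at h
  exact tendsto_const_nhds_iff.1 h

end Euler

section Assembly

variable {q a b : ℂ}

noncomputable def rsSummand (q a b : ℂ) (y : (ℕ × ℕ) × ℕ) : ℂ :=
  a ^ y.1.1 * b ^ y.1.2 * rsCoeffSummand q y.1.1 y.1.2 y.2

lemma rsSummand_add (q a b : ℂ) (t r s : ℕ) :
    rsSummand q a b ((r + t, s + t), t)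
      = eulerCoeff (q ^ 2) t * (a * b * q) ^ t
        * ((qp q q r)⁻¹ * a ^ r * ((qp q q s)⁻¹ * b ^ s)) := by
  simp only [rsSummand, rsCoeffSummand, qpInvSub_add_self]
  ring

lemma rsSummand_eq_zero {k m t : ℕ} (h : ¬(t ≤ k ∧ t ≤ m)) : rsSummand q a b ((k, m), t) = 0 := by
  rcases not_and_or.1 h with h | h <;>
    simp [rsSummand, rsCoeffSummand, qpInvSub_of_lt (not_le.1 h)]

lemma norm_sq_lt_one (hq : ‖q‖ < 1) : ‖q ^ 2‖ < 1 := by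
  simpa using pow_lt_one₀ (norm_nonneg q) hq two_ne_zero

lemma qpinf_div_eq_tsum_mul (hq : ‖q‖ < 1) (ha : ‖a‖ < 1) (hb : ‖b‖ < 1) :
    qpinf (a * b * q) (q ^ 2) / (qpinf a q * qpinf b q)
      = (∑' t, eulerCoeff (q ^ 2) t * (a * b * q) ^ t)
        * ((∑' r, (qp q q r)⁻¹ * a ^ r) * ∑' s, (qp q q s)⁻¹ * b ^ s) := by
  rw [tsum_eulerCoeff_mul_pow (norm_sq_lt_one hq),
    ← inv_eq_of_mul_eq_one_right (qpinf_mul_tsum_inv_qp_mul_pow hq ha),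
    ← inv_eq_of_mul_eq_one_right (qpinf_mul_tsum_inv_qp_mul_pow hq hb), div_eq_mul_inv, mul_inv]

lemma hasSum_rsSummand (hq : ‖q‖ < 1) (ha : ‖a‖ < 1) (hb : ‖b‖ < 1) :
    HasSum (rsSummand q a b) (qpinf (a * b * q) (q ^ 2) / (qpinf a q * qpinf b q)) := by
  have hA := (summable_inv_qp_mul_pow hq ha).norm
  have hB := (summable_inv_qp_mul_pow hq hb).norm
  have hE := (summable_eulerCoeff_mul_pow (norm_sq_lt_one hq) (a * b * q)).norm
  have hprod : HasSum (rsSummand q a b ∘ fun z : ℕ × ℕ × ℕ => ((z.2.1 + z.1, z.2.2 + z.1), z.1))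
      (qpinf (a * b * q) (q ^ 2) / (qpinf a q * qpinf b q)) := by
    rw [Function.comp_def, funext fun z : ℕ × ℕ × ℕ => rsSummand_add q a b z.1 z.2.1 z.2.2,
      qpinf_div_eq_tsum_mul hq ha hb, tsum_mul_tsum_of_summable_norm hA hB,
      tsum_mul_tsum_of_summable_norm hE (hA.mul_norm hB)]
    exact (summable_mul_of_summable_norm hE (hA.mul_norm hB)).hasSum
  refine (Function.Injective.hasSum_iff ?_ fun y hy => ?_).1 hprod
  · rintro ⟨t, r, s⟩ ⟨t', r', s'⟩ h
    simp only [Prod.mk.injEq] at h ⊢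
    omega
  · obtain ⟨⟨k, m⟩, t⟩ := y
    refine rsSummand_eq_zero fun ⟨hk, hm⟩ => hy ⟨(t, k - t, m - t), ?_⟩
    simp [Nat.sub_add_cancel hk, Nat.sub_add_cancel hm]

lemma hasSum_rsSummand_fiber (hq : ¬IsOfFinOrder q) (k m : ℕ) :
    HasSum (fun t => rsSummand q a b ((k, m), t)) (a ^ k * b ^ m * rsCoeff q k m) := by
  rw [← sum_rsCoeffSummand hq, Finset.mul_sum]
  exact hasSum_sum_of_ne_finset_zero fun t ht =>
    rsSummand_eq_zero fun h => ht (Finset.mem_range_succ_iff.2 h.2)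

theorem hasSum_rsCoeff (hq : ‖q‖ < 1) (ha : ‖a‖ < 1) (hb : ‖b‖ < 1) :
    HasSum (fun p : ℕ × ℕ => a ^ p.1 * b ^ p.2 * rsCoeff q p.1 p.2)
      (qpinf (a * b * q) (q ^ 2) / (qpinf a q * qpinf b q)) :=
  (hasSum_rsSummand hq ha hb).prod_fiberwise fun p =>
    hasSum_rsSummand_fiber (not_isOfFinOrder_of_norm_lt_one hq) p.1 p.2

lemma rs_sq_div_qp (hq : ¬IsOfFinOrder q) (a b : ℂ) (n : ℕ) :
    RS a b (q ^ 2) n / qp q q n = ∑ p ∈ antidiagonal n, a ^ p.1 * b ^ p.2 * rsCoeff q p.1 p.2 := by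
  rw [Nat.sum_antidiagonal_eq_sum_range_succ (fun k m => a ^ k * b ^ m * rsCoeff q k m), RS,
    Finset.sum_div]
  refine Finset.sum_congr rfl fun k hk => ?_
  rw [← qbinom_sq_div_qp hq (Finset.mem_range_succ_iff.1 hk)]
  ring

end Assembly

theorem stmt8 (q a b : ℂ) (hq : ‖q‖ < 1)
    (ha : ‖a‖ < 1) (hb : ‖b‖ < 1) :
    ∑' n : ℕ, RS a b (q ^ 2) n / qp q q n
      = qpinf (a * b * q) (q ^ 2) / (qpinf a q * qpinf b q) := by
  have h := hasSum_rsCoeff hq ha hb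
  rw [← h.tsum_eq, tsum_eq_tsum_sum_antidiagonal h.summable]
  exact tsum_congr (rs_sq_div_qp (not_isOfFinOrder_of_norm_lt_one hq) a b)
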